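/- Let Z be integrable with continuous strictly increasing distribution function F and quantile function Q, and α ∈ (0,1). Then CVaR_α(Z) = (1−α)⁻¹ · min_{ξ ∈ ℝ} E[ρ_α(Z − ξ)] + E[Z] (the Bassett–Koenker–Kordas representation of expected shortfall). -/

import Mathlib

/-!
Since `ρ_α(u) = max u 0 - (1 - α) u`, we have `E ρ_α(Z - ξ) = E (Z - ξ)⁺ - (1 - α)(E Z - ξ)`.
For `S = {Z > q}`, `E (Z - ξ)⁺ ≥ E[(Z - ξ) 𝟙_S] = E[Z 𝟙_S] - ξ P(S)`, with equality at `ξ = q`.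
Since `P(S) = 1 - α`, the `ξ`-terms cancel, so the lower bound `E[Z 𝟙_S] - (1 - α) E Z` does not
depend on `ξ` and is attained at `q`.
-/

open MeasureTheory Set

def checkLoss (α u : ℝ) : ℝ := α * max u 0 + (1 - α) * max (-u) 0

lemma checkLoss_eq_max_sub (α u : ℝ) : checkLoss α u = max u 0 - (1 - α) * u := by
  rcases le_total u 0 with h | h
  · rw [checkLoss, max_eq_right h, max_eq_left (neg_nonneg.2 h)]; ring
  · rw [checkLoss, max_eq_left h, max_eq_right (neg_nonpos.2 h)]; ring

section

variable {Ω : Type*} [MeasurableSpace Ω] {μ : Measure Ω} [IsFiniteMeasure μ] {Z : Ω → ℝ}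

lemma setIntegral_sub_const (hZ : Integrable Z μ) (S : Set Ω) (ξ : ℝ) :
    ∫ ω in S, (Z ω - ξ) ∂μ = ∫ ω in S, Z ω ∂μ - ξ * μ.real S := by
  rw [integral_sub hZ.integrableOn (integrableOn_const (C := ξ)), setIntegral_const, smul_eq_mul,
    mul_comm]

lemma setIntegral_sub_le_integral_max (hZ : Integrable Z μ) (S : Set Ω) (ξ : ℝ) :
    ∫ ω in S, Z ω ∂μ - ξ * μ.real S ≤ ∫ ω, max (Z ω - ξ) 0 ∂μ := by
  have hZξ : Integrable (fun ω => Z ω - ξ) μ := hZ.sub (integrable_const ξ)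
  calc ∫ ω in S, Z ω ∂μ - ξ * μ.real S = ∫ ω in S, (Z ω - ξ) ∂μ :=
        (setIntegral_sub_const hZ S ξ).symm
    _ ≤ ∫ ω in S, max (Z ω - ξ) 0 ∂μ :=
        setIntegral_mono hZξ.integrableOn hZξ.pos_part.integrableOn fun ω => le_max_left _ _
    _ ≤ ∫ ω, max (Z ω - ξ) 0 ∂μ :=
        setIntegral_le_integral hZξ.pos_part (ae_of_all _ fun ω => le_max_right _ _)

lemma integral_max_sub_eq_setIntegral (hZ : Integrable Z μ) (q : ℝ) :
    ∫ ω, max (Z ω - q) 0 ∂μ = ∫ ω in {ω | q < Z ω}, Z ω ∂μ - q * μ.real {ω | q < Z ω} := by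
  have hmax : (fun ω => max (Z ω - q) 0) = {ω | q < Z ω}.indicator (fun ω => Z ω - q) := by
    funext ω
    by_cases h : q < Z ω
    · rw [indicator_of_mem (show ω ∈ {ω | q < Z ω} from h), max_eq_left (sub_nonneg.2 h.le)]
    · rw [indicator_of_notMem (show ω ∉ {ω | q < Z ω} from h),
        max_eq_right (sub_nonpos.2 (not_lt.1 h))]
  rw [hmax, integral_indicator₀ (nullMeasurableSet_lt aemeasurable_const hZ.aemeasurable),
    setIntegral_sub_const hZ]

end

section

variable {Ω : Type*} [MeasurableSpace Ω] {μ : Measure Ω} [IsProbabilityMeasure μ] {Z : Ω → ℝ}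

lemma integral_checkLoss (hZ : Integrable Z μ) (α ξ : ℝ) :
    ∫ ω, checkLoss α (Z ω - ξ) ∂μ = ∫ ω, max (Z ω - ξ) 0 ∂μ - (1 - α) * (∫ ω, Z ω ∂μ - ξ) := by
  have hZξ : Integrable (fun ω => Z ω - ξ) μ := hZ.sub (integrable_const ξ)
  simp_rw [checkLoss_eq_max_sub]
  rw [integral_sub hZξ.pos_part (hZξ.const_mul _), integral_const_mul,
    integral_sub hZ (integrable_const ξ), integral_const, probReal_univ, one_smul]

lemma isLeast_integral_checkLoss (hZ : Integrable Z μ) {α q : ℝ}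
    (hq : μ.real {ω | q < Z ω} = 1 - α) :
    IsLeast (range fun ξ => ∫ ω, checkLoss α (Z ω - ξ) ∂μ)
      (∫ ω in {ω | q < Z ω}, Z ω ∂μ - (1 - α) * ∫ ω, Z ω ∂μ) := by
  refine ⟨⟨q, ?_⟩, ?_⟩
  · dsimp only
    rw [integral_checkLoss hZ, integral_max_sub_eq_setIntegral hZ, hq]
    ring
  · rintro _ ⟨ξ, rfl⟩
    have hle := setIntegral_sub_le_integral_max hZ {ω | q < Z ω} ξ
    rw [hq] at hle
    dsimp only
    rw [integral_checkLoss hZ]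
    linarith

end

theorem cvar_koenker_representation_general {Ω : Type*} [MeasurableSpace Ω] (μ : Measure Ω)
    [IsProbabilityMeasure μ] (Z : Ω → ℝ) (hZ : Integrable Z μ)
    (F : ℝ → ℝ) (hF : F = fun z => (μ {ω | Z ω ≤ z}).toReal)
    (α : ℝ) (hα : α ∈ Set.Ioo (0:ℝ) 1) (q : ℝ) (hq : F q = α) :
    (1 - α)⁻¹ * (∫ ω in {ω | Z ω > q}, Z ω ∂μ)
      = (1 - α)⁻¹ *
          (⨅ ξ : ℝ, ∫ ω, (α * max (Z ω - ξ) 0 + (1 - α) * max (-(Z ω - ξ)) 0) ∂μ)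
        + ∫ ω, Z ω ∂μ := by
  have htail : μ.real {ω | q < Z ω} = 1 - α := by
    rw [← hq, hF]
    dsimp only
    rw [← measureReal_def,
      ← probReal_compl_eq_one_sub₀ (nullMeasurableSet_le hZ.aemeasurable aemeasurable_const)]
    simp only [compl_ofPred, not_le]
  have hmin : ⨅ ξ : ℝ, ∫ ω, checkLoss α (Z ω - ξ) ∂μ
      = ∫ ω in {ω | q < Z ω}, Z ω ∂μ - (1 - α) * ∫ ω, Z ω ∂μ :=
    (isLeast_integral_checkLoss hZ htail).csInf_eq
  have hα₁ : 1 - α ≠ 0 := by linarith [hα.2]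
  simp only [checkLoss] at hmin
  rw [hmin]
  field_simp
  ring

/-- Bassett–Koenker–Kordas representation of expected shortfall:
CVaR_α(Z) = (1−α)⁻¹ · min_{ξ∈ℝ} E[ρ_α(Z − ξ)] + E[Z]. -/
theorem cvar_koenker_representation {Ω : Type*} [MeasurableSpace Ω] (μ : Measure Ω)
    [IsProbabilityMeasure μ] (Z : Ω → ℝ) (hZm : Measurable Z) (hZ : Integrable Z μ)
    (F : ℝ → ℝ) (hF : F = fun z => (μ {ω | Z ω ≤ z}).toReal)
    (hFc : Continuous F)
    (hFm : StrictMonoOn F {z | 0 < F z ∧ F z < 1})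
    (α : ℝ) (hα : α ∈ Set.Ioo (0:ℝ) 1) (q : ℝ) (hq : F q = α) :
    (1 - α)⁻¹ * (∫ ω in {ω | Z ω > q}, Z ω ∂μ)
      = (1 - α)⁻¹ *
          (⨅ ξ : ℝ, ∫ ω, (α * max (Z ω - ξ) 0 + (1 - α) * max (-(Z ω - ξ)) 0) ∂μ)
        + ∫ ω, Z ω ∂μ :=
  cvar_koenker_representation_general μ Z hZ F hF α hα q hq
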